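/- Let A ∈ ℝ^{n×n} be symmetric positive semidefinite and J ⊆ {1,…,n} with |J| = r such that A(J,J) is invertible. Then ‖A − A_J‖_* = Σ_{Ĵ : J ⊂ Ĵ, |Ĵ| = r+1} det(A(Ĵ,Ĵ)) / det(A(J,J)), where the sum ranges over all index sets Ĵ ⊆ {1,…,n} of cardinality r+1 containing J. -/

import Mathlib

open Matrix Finset

/-- Cross approximation `A_J = A(:,J) A(J,J)⁻¹ A(J,:)` built on the principal submatrix
indexed by the finite index set `J`. -/
noncomputable def crossApprox {n : ℕ} (A : Matrix (Fin n) (Fin n) ℝ) (J : Finset (Fin n)) :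
    Matrix (Fin n) (Fin n) ℝ :=
  A.submatrix id (Subtype.val : J → Fin n) *
    (A.submatrix (Subtype.val : J → Fin n) (Subtype.val : J → Fin n))⁻¹ *
    A.submatrix (Subtype.val : J → Fin n) id

/-- Determinant of the principal submatrix `A(J,J)`. -/
noncomputable def pminor {n : ℕ} (A : Matrix (Fin n) (Fin n) ℝ) (J : Finset (Fin n)) : ℝ :=
  (A.submatrix (Subtype.val : J → Fin n) (Subtype.val : J → Fin n)).det

/-- Nuclear norm: sum of the singular values of `M`, i.e. of the square roots of the
eigenvalues of `Mᴴ M`. -/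
noncomputable def nuclearNorm {n : ℕ} (M : Matrix (Fin n) (Fin n) ℝ) : ℝ :=
  ∑ i, Real.sqrt ((Matrix.isHermitian_conjTranspose_mul_self M).eigenvalues i)

/-- Frobenius norm. -/
noncomputable def frobNorm {n : ℕ} (M : Matrix (Fin n) (Fin n) ℝ) : ℝ :=
  Real.sqrt (∑ i, ∑ j, (M i j) ^ 2)

/-- Spectral norm: the largest singular value. -/
noncomputable def specNorm {n : ℕ} (M : Matrix (Fin n) (Fin n) ℝ) : ℝ :=
  ⨆ i, Real.sqrt ((Matrix.isHermitian_conjTranspose_mul_self M).eigenvalues i)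

/-- Max norm: largest magnitude of an entry. -/
noncomputable def maxNorm {n : ℕ} (M : Matrix (Fin n) (Fin n) ℝ) : ℝ :=
  ⨆ i, ⨆ j, |M i j|

/-- The tuple `f` sorted in nonincreasing order. -/
noncomputable def sortedDesc {m : ℕ} (f : Fin m → ℝ) : Fin m → ℝ :=
  fun i => -(((fun j => -f j) ∘ Tuple.sort fun j => -f j) i)

/-- `Esum M k` is the sum of all `k × k` principal minors of `M`. -/
noncomputable def Esum {n : ℕ} (M : Matrix (Fin n) (Fin n) ℝ) (k : ℕ) : ℝ :=
  ∑ K ∈ Finset.powersetCard k (Finset.univ : Finset (Fin n)), pminor M K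

/-! The residual `A - A_J` is the Schur complement of `A(J,J)` in the positive semidefinite
bordered matrix `[[A(J,J), A(J,:)], [A(:,J), A]]`, so it is positive semidefinite and its nuclear
norm is its trace. Its diagonal vanishes on `J`, and for `i ∉ J` the Schur determinant formula
gives `det A(J ∪ {i}, J ∪ {i}) = det A(J,J) · (A - A_J)ᵢᵢ`. -/

open Polynomial in
lemma Matrix.IsHermitian.sum_comp_eigenvalues_of_eq_cfc {𝕜 m : Type*} [RCLike 𝕜] [Fintype m]
    [DecidableEq m] {A B : Matrix m m 𝕜} (hA : A.IsHermitian) (hB : B.IsHermitian) (f : ℝ → ℝ)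
    (hBA : B = cfc f A) (φ : ℝ → ℝ) :
    ∑ i, φ (hB.eigenvalues i) = ∑ i, φ (f (hA.eigenvalues i)) := by
  subst hBA
  have hroots := hB.roots_charpoly_eq_eigenvalues
  rw [hA.charpoly_cfc_eq,
    roots_prod _ _ (monic_prod_of_monic _ _ fun i _ => monic_X_sub_C _).ne_zero] at hroots
  have := congrArg (Multiset.map (φ ∘ RCLike.re)) hroots
  simp only [Multiset.map_map, roots_X_sub_C, Multiset.bind_singleton, Function.comp_def,
    RCLike.ofReal_re] at this
  rw [← Finset.sum_map_val, ← Finset.sum_map_val, ← this]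

lemma Matrix.IsHermitian.nuclearNorm_eq_sum_abs_eigenvalues {n : ℕ}
    {E : Matrix (Fin n) (Fin n) ℝ} (hE : E.IsHermitian) :
    nuclearNorm E = ∑ i, |hE.eigenvalues i| := by
  have hsq : Eᴴ * E = cfc (· ^ 2 : ℝ → ℝ) E := by
    rw [cfc_pow_id E 2 hE.isSelfAdjoint, hE.eq, sq]
  rw [nuclearNorm, hE.sum_comp_eigenvalues_of_eq_cfc _ _ hsq]
  simp only [Real.sqrt_sq_eq_abs]

lemma Matrix.PosSemidef.nuclearNorm_eq_trace {n : ℕ} {E : Matrix (Fin n) (Fin n) ℝ}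
    (hE : E.PosSemidef) : nuclearNorm E = E.trace := by
  rw [hE.1.nuclearNorm_eq_sum_abs_eigenvalues, hE.1.trace_eq_sum_eigenvalues]
  exact Finset.sum_congr rfl fun i _ => abs_of_nonneg (hE.eigenvalues_nonneg i)

lemma Matrix.submatrix_sumElim_eq_fromBlocks {α β ι κ ι' κ' R : Type*} (A : Matrix α β R)
    (f : ι → α) (g : κ → α) (f' : ι' → β) (g' : κ' → β) :
    A.submatrix (Sum.elim f g) (Sum.elim f' g') =
      fromBlocks (A.submatrix f f') (A.submatrix f g') (A.submatrix g f') (A.submatrix g g') :=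
  (fromBlocks_toBlocks _).symm

lemma Finset.filter_superset_card_succ_eq_image_insert {α : Type*} [Fintype α] [DecidableEq α]
    (J : Finset α) :
    univ.filter (fun K : Finset α => J ⊆ K ∧ K.card = J.card + 1) = Jᶜ.image (insert · J) := by
  ext K
  simp only [mem_filter, mem_univ, true_and, mem_image, mem_compl]
  rw [exists_eq_insert_iff, eq_comm (a := #K)]

section CrossApprox

variable {n : ℕ} (A : Matrix (Fin n) (Fin n) ℝ) (J : Finset (Fin n))

lemma submatrix_crossApprox {ι κ : Type*} (g : ι → Fin n) (h : κ → Fin n) :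
    (crossApprox A J).submatrix g h =
      A.submatrix g (Subtype.val : J → Fin n) *
        (A.submatrix (Subtype.val : J → Fin n) (Subtype.val : J → Fin n))⁻¹ *
        A.submatrix (Subtype.val : J → Fin n) h := by
  rw [crossApprox, submatrix_mul _ _ _ id _ Function.bijective_id,
    submatrix_mul _ _ _ id _ Function.bijective_id]
  rfl

variable {A J}

lemma crossApprox_apply_of_mem (hJ : pminor A J ≠ 0) {i : Fin n} (hi : i ∈ J) (j : Fin n) :
    crossApprox A J i j = A i j := by
  have hrows :=
    congrFun (congrFun (submatrix_crossApprox A J (Subtype.val : J → Fin n) id) ⟨i, hi⟩) j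
  rwa [mul_nonsing_inv _ (isUnit_iff_ne_zero.mpr hJ), Matrix.one_mul] at hrows

lemma det_submatrix_sumElim {ι : Type*} [Fintype ι] [DecidableEq ι] (hJ : pminor A J ≠ 0)
    (g : ι → Fin n) :
    (A.submatrix (Sum.elim (Subtype.val : J → Fin n) g) (Sum.elim Subtype.val g)).det =
      pminor A J * ((A - crossApprox A J).submatrix g g).det := by
  have := invertibleOfIsUnitDet _ (isUnit_iff_ne_zero.mpr hJ)
  rw [submatrix_sumElim_eq_fromBlocks, det_fromBlocks₁₁, invOf_eq_nonsing_inv,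
    ← submatrix_crossApprox]
  rfl

lemma pminor_insert (hJ : pminor A J ≠ 0) {i : Fin n} (hi : i ∉ J) :
    pminor A (insert i J) = pminor A J * (A - crossApprox A J) i i := by
  let e : (insert i J : Finset (Fin n)) ≃ J ⊕ Unit :=
    (subtypeInsertEquivOption hi).trans (Equiv.optionEquivSumPUnit _)
  rw [pminor, ← det_submatrix_equiv_self e.symm]
  have : Subtype.val ∘ e.symm = Sum.elim Subtype.val fun _ => i := by
    ext (x | x) <;> rfl
  rw [submatrix_submatrix, this, det_submatrix_sumElim hJ, det_unique]
  rfl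

lemma posSemidef_sub_crossApprox (hA : A.PosSemidef) (hJ : pminor A J ≠ 0) :
    (A - crossApprox A J).PosSemidef := by
  set S := A.submatrix (Subtype.val : J → Fin n) (Subtype.val : J → Fin n)
  have hS : S.PosDef := (hA.submatrix _).posDef_iff_isUnit.mpr
    ((isUnit_iff_isUnit_det S).mpr (isUnit_iff_ne_zero.mpr hJ))
  have := hS.isUnit.invertible
  have hcols : A.submatrix id (Subtype.val : J → Fin n) = (A.submatrix Subtype.val id)ᴴ := by
    rw [conjTranspose_submatrix, hA.1.eq]
  have hbordered := hA.submatrix (Sum.elim (Subtype.val : J → Fin n) id)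
  rwa [submatrix_sumElim_eq_fromBlocks, hcols, hS.fromBlocks₁₁, ← hcols, ← submatrix_crossApprox,
    submatrix_id_id, submatrix_id_id] at hbordered

lemma trace_sub_crossApprox (hJ : pminor A J ≠ 0) :
    (A - crossApprox A J).trace = ∑ i ∈ Jᶜ, pminor A (insert i J) / pminor A J := by
  have hzero : ∑ i ∈ J, (A - crossApprox A J) i i = 0 :=
    sum_eq_zero fun i hi => by rw [Matrix.sub_apply, crossApprox_apply_of_mem hJ hi, sub_self]
  rw [trace, ← sum_compl_add_sum J]
  simp only [diag_apply, hzero, add_zero]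
  refine sum_congr rfl fun i hi => ?_
  rw [pminor_insert hJ (mem_compl.mp hi), mul_div_cancel_left₀ _ hJ]

end CrossApprox

/-- For `A` SPSD and `J` with `|J| = r` and `A(J,J)` invertible,
`‖A - A_J‖_* = ∑_{Ĵ ⊇ J, |Ĵ| = r+1} det A(Ĵ,Ĵ) / det A(J,J)`. -/
theorem nuclearNorm_residual_eq_sum_minor_ratios {n r : ℕ}
    (A : Matrix (Fin n) (Fin n) ℝ) (hA : A.PosSemidef)
    (J : Finset (Fin n)) (hJcard : J.card = r) (hJinv : pminor A J ≠ 0) :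
    nuclearNorm (A - crossApprox A J) =
      ∑ K ∈ Finset.univ.filter (fun K : Finset (Fin n) => J ⊆ K ∧ K.card = r + 1),
        pminor A K / pminor A J := by
  subst hJcard
  rw [(posSemidef_sub_crossApprox hA hJinv).nuclearNorm_eq_trace, trace_sub_crossApprox hJinv,
    filter_superset_card_succ_eq_image_insert, sum_image]
  intro a ha b _ hab
  exact (insert_inj (mem_compl.mp ha)).mp hab
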